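/- arXiv:1805.08883 — 5 statements merged into one kernel-verified Lean document; each statement's English description precedes it below -/
import Mathlib

section
/- Let P and Q be probability measures on a measurable space with Q ≪ P and density r = dQ/dP satisfying 0 < m ≤ r(x) ≤ M < ∞ for P-a.e. x. For f ∈ L²(P) with ∫ f dP = 0 (an influence function), define g = (f − (∫ f · (1/r) dP) / (∫ (1/r) dP)) · (1/r). Then g ∈ L²(P), ∫ g dP = 0, and for every v ∈ L²(P) with ∫ v dP = 0, ∫ g · v dQ = ∫ f · v dP. -/
/-!
Since `dQ = r dP`, the `L²(Q)` pairing of `g = (f - c) / r` with `v` is the `L²(P)` pairing of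
`f - c` with `v`, and the constant `c` drops out because `v` has mean zero. The constant is the
`1/r`-weighted mean of `f`, which is exactly what makes `g` mean zero under `P`.
-/

open MeasureTheory

section

variable {α : Type*} [MeasurableSpace α] {μ : Measure α}

lemma integral_pos_of_ae_pos [NeZero μ] {f : α → ℝ} (hf : ∀ᵐ x ∂μ, 0 < f x)
    (hfi : Integrable f μ) : 0 < ∫ x, f x ∂μ := by
  have hf_nonneg : 0 ≤ᵐ[μ] f := hf.mono fun _ hx => hx.le
  refine (integral_nonneg_of_ae hf_nonneg).lt_of_ne fun h => ?_
  have hf_zero : f =ᵐ[μ] 0 := (integral_eq_zero_iff_of_nonneg_ae hf_nonneg hfi).1 h.symm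
  obtain ⟨x, hx_pos, hx_zero⟩ := (hf.and hf_zero).exists
  exact hx_pos.ne' hx_zero

lemma memLp_top_one_div_of_le {r : α → ℝ} (hr : Measurable r) {m : ℝ} (hm : 0 < m)
    (hrm : ∀ᵐ x ∂μ, m ≤ r x) : MemLp (fun x => 1 / r x) ⊤ μ :=
  memLp_top_of_bound (hr.const_div 1).aestronglyMeasurable (1 / m) <| by
    filter_upwards [hrm] with x hx
    rw [Real.norm_of_nonneg (one_div_nonneg.2 (hm.le.trans hx))]
    exact one_div_le_one_div_of_le hm hx

lemma integral_withDensity_ofReal {r : α → ℝ} (hr : Measurable r) (hr_nonneg : 0 ≤ᵐ[μ] r)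
    (h : α → ℝ) :
    ∫ x, h x ∂μ.withDensity (fun x => ENNReal.ofReal (r x)) = ∫ x, r x * h x ∂μ := by
  rw [integral_withDensity_eq_integral_toReal_smul hr.ennreal_ofReal
    (ae_of_all _ fun _ => ENNReal.ofReal_lt_top)]
  refine integral_congr_ae ?_
  filter_upwards [hr_nonneg] with x hx
  rw [ENNReal.toReal_ofReal hx, smul_eq_mul]

lemma integral_sub_weightedMean_mul_eq_zero {f w : α → ℝ}
    (hfw : Integrable (fun x => f x * w x) μ) (hw : Integrable w μ) (hw_ne : ∫ x, w x ∂μ ≠ 0) :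
    ∫ x, (f x - (∫ y, f y * w y ∂μ) / (∫ y, w y ∂μ)) * w x ∂μ = 0 := by
  simp_rw [sub_mul]
  rw [integral_sub hfw (hw.const_mul _), integral_const_mul, div_mul_cancel₀ _ hw_ne, sub_self]

lemma integral_sub_const_mul_of_integral_eq_zero {f v : α → ℝ} (c : ℝ)
    (hfv : Integrable (fun x => f x * v x) μ) (hv : Integrable v μ) (hv_zero : ∫ x, v x ∂μ = 0) :
    ∫ x, (f x - c) * v x ∂μ = ∫ x, f x * v x ∂μ := by
  simp_rw [sub_mul]
  rw [integral_sub hfv (hv.const_mul c), integral_const_mul, hv_zero, mul_zero, sub_zero]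

end

theorem stmt6_general {α : Type*} [MeasurableSpace α] (P Q : Measure α)
    [IsProbabilityMeasure P]
    (r : α → ℝ) (hr : Measurable r)
    (hQ : Q = P.withDensity (fun x => ENNReal.ofReal (r x)))
    (m M : ℝ) (hm : 0 < m) (hbound : ∀ᵐ x ∂P, m ≤ r x ∧ r x ≤ M)
    (f : α → ℝ) (hf : MemLp f 2 P)
    (g : α → ℝ)
    (hg : g = fun x =>
      (f x - (∫ y, f y * (1 / r y) ∂P) / (∫ y, (1 / r y) ∂P)) * (1 / r x)) :
    MemLp g 2 P ∧ (∫ x, g x ∂P = 0) ∧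
      ∀ v : α → ℝ, MemLp v 2 P → (∫ x, v x ∂P = 0) →
        ∫ x, g x * v x ∂Q = ∫ x, f x * v x ∂P := by
  subst hg hQ
  set c : ℝ := (∫ y, f y * (1 / r y) ∂P) / (∫ y, (1 / r y) ∂P)
  have hrm : ∀ᵐ x ∂P, m ≤ r x := hbound.mono fun _ hx => hx.1
  have hr_pos : ∀ᵐ x ∂P, 0 < r x := hrm.mono fun _ hx => hm.trans_le hx
  have hw : MemLp (fun x => 1 / r x) ⊤ P := memLp_top_one_div_of_le hr hm hrm
  have hw_int : Integrable (fun x => 1 / r x) P := hw.integrable le_top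
  have hw_pos : 0 < ∫ x, 1 / r x ∂P :=
    integral_pos_of_ae_pos (hr_pos.mono fun _ hx => one_div_pos.2 hx) hw_int
  refine ⟨hw.mul' (hf.sub (memLp_const c)),
    integral_sub_weightedMean_mul_eq_zero ((hf.integrable one_le_two).mul_of_top_left hw) hw_int
      hw_pos.ne', fun v hv hv_zero => ?_⟩
  calc ∫ x, (f x - c) * (1 / r x) * v x ∂P.withDensity (fun x => ENNReal.ofReal (r x))
      = ∫ x, (f x - c) * v x ∂P := by
        rw [integral_withDensity_ofReal hr (hr_pos.mono fun _ hx => hx.le)]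
        refine integral_congr_ae ?_
        filter_upwards [hr_pos] with x hx
        field_simp
    _ = ∫ x, f x * v x ∂P :=
        integral_sub_const_mul_of_integral_eq_zero c (hf.integrable_mul hv)
          (hv.integrable one_le_two) hv_zero

/-- Policy gradient formula: if `dQ/dP = r` with `0 < m ≤ r ≤ M`, and `f` is a
mean-zero square-integrable influence function, then the policy gradient
`g = (f - (∫ f/r dP)/(∫ 1/r dP)) * (1/r)` is mean-zero square-integrable and
represents the same differential with respect to the `L²(Q)` inner product:
`∫ g v dQ = ∫ f v dP` for all mean-zero `v ∈ L²(P)`. -/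
theorem stmt6 {α : Type*} [MeasurableSpace α] (P Q : Measure α)
    [IsProbabilityMeasure P] [IsProbabilityMeasure Q]
    (r : α → ℝ) (hr : Measurable r)
    (hQ : Q = P.withDensity (fun x => ENNReal.ofReal (r x)))
    (m M : ℝ) (hm : 0 < m) (hbound : ∀ᵐ x ∂P, m ≤ r x ∧ r x ≤ M)
    (f : α → ℝ) (hf : MemLp f 2 P) (hf0 : ∫ x, f x ∂P = 0)
    (g : α → ℝ)
    (hg : g = fun x =>
      (f x - (∫ y, f y * (1 / r y) ∂P) / (∫ y, (1 / r y) ∂P)) * (1 / r x)) :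
    MemLp g 2 P ∧ (∫ x, g x ∂P = 0) ∧
      ∀ v : α → ℝ, MemLp v 2 P → (∫ x, v x ∂P = 0) →
        ∫ x, g x * v x ∂Q = ∫ x, f x * v x ∂P :=
  stmt6_general P Q r hr hQ m M hm hbound f hf g hg
end

section
/- Let F be a continuous strictly increasing distribution function on ℝ differentiable at its p-quantile q_p = F⁻¹(p) with F'(q_p) = f(q_p) > 0, for 0 < p < 1. Let G be a distribution function continuous at q_p, and let F_t = (1−t)F + tG. Then the quantile t ↦ F_t⁻¹(p) is differentiable at t = 0 with derivative (p − G(q_p))/f(q_p). -/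
/-!
Write `Q t` for the `p`-quantile of `F_t`. The defining equation `(1 - t) F(Q t) + t G(Q t) = p`
rearranges to `F(Q t) - p = t (F(Q t) - G(Q t))`, so `F(Q t) → p` and, `F` being strictly
increasing, `Q t → q`. Factor `F x - F q = (x - q) · dslope F q x`, where `dslope F q` is continuous
at `q` with value `f(q) ≠ 0`. Then `(Q t - q) / t = (F(Q t) - G(Q t)) / dslope F q (Q t)`,
which tends to `(p - G q) / f(q)`.
-/

open Filter Topology

theorem StrictMono.tendsto_of_tendsto_comp {α β γ : Type*} [LinearOrder α] [TopologicalSpace α]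
    [OrderTopology α] [LinearOrder β] [TopologicalSpace β] [OrderTopology β] {F : α → β}
    (hF : StrictMono F) {l : Filter γ} {Q : γ → α} {q : α}
    (h : Tendsto (F ∘ Q) l (𝓝 (F q))) : Tendsto Q l (𝓝 q) := by
  rw [tendsto_order] at h ⊢
  exact ⟨fun a ha => (h.1 _ (hF ha)).mono fun _ => hF.lt_iff_lt.1,
    fun b hb => (h.2 _ (hF hb)).mono fun _ => hF.lt_iff_lt.1⟩

section MixtureRoot

variable {F G Q : ℝ → ℝ} {q : ℝ} {s : Set ℝ}

lemma sub_eq_mul_of_mixture_eq {x t : ℝ} (h : (1 - t) * F x + t * G x = F q) :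
    F x - F q = t * (F x - G x) := by
  linear_combination h

theorem tendsto_of_mixture_eq (hF : StrictMono F) {C : ℝ} (hFG : ∀ x, |F x - G x| ≤ C)
    (hQ : ∀ t ∈ s, (1 - t) * F (Q t) + t * G (Q t) = F q) : Tendsto Q (𝓝[s] 0) (𝓝 q) := by
  refine hF.tendsto_of_tendsto_comp (tendsto_iff_norm_sub_tendsto_zero.2 ?_)
  refine squeeze_zero_norm' (a := fun t => ‖t‖ * C) ?_ ?_
  · filter_upwards [self_mem_nhdsWithin] with t ht
    rw [norm_norm, Function.comp_apply, sub_eq_mul_of_mixture_eq (hQ t ht), norm_mul]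
    gcongr
    exact hFG _
  · simpa only [zero_mul] using (tendsto_norm_zero.mono_left nhdsWithin_le_nhds).mul_const C

theorem hasDerivWithinAt_of_mixture_eq {f' : ℝ} (hQ0 : Q 0 = q)
    (hQc : Tendsto Q (𝓝[s \ {0}] 0) (𝓝 q)) (hF : HasDerivAt F f' q) (hf' : f' ≠ 0)
    (hG : ContinuousAt G q) (hQ : ∀ t ∈ s, (1 - t) * F (Q t) + t * G (Q t) = F q) :
    HasDerivWithinAt Q ((F q - G q) / f') s 0 := by
  have hdslope : Tendsto (fun t => dslope F q (Q t)) (𝓝[s \ {0}] 0) (𝓝 f') := by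
    simpa only [Function.comp_def, dslope_same, hF.deriv] using
      (continuousAt_dslope_same.2 hF.differentiableAt).tendsto.comp hQc
  have hdiff : Tendsto (fun t => F (Q t) - G (Q t)) (𝓝[s \ {0}] 0) (𝓝 (F q - G q)) :=
    (hF.continuousAt.tendsto.comp hQc).sub (hG.tendsto.comp hQc)
  rw [hasDerivWithinAt_iff_tendsto_slope]
  refine (hdiff.div hdslope hf').congr' ?_
  filter_upwards [self_mem_nhdsWithin, hdslope.eventually_ne hf'] with t ⟨hts, ht0⟩ hc
  have hfactor : (Q t - q) * dslope F q (Q t) = t * (F (Q t) - G (Q t)) := by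
    rw [← smul_eq_mul, sub_smul_dslope, sub_eq_mul_of_mixture_eq (hQ t hts)]
  rw [Pi.div_apply, slope_def_field, hQ0, sub_zero, div_eq_div_iff hc ht0]
  linear_combination -hfactor

end MixtureRoot

theorem stmt10_general (F G : ℝ → ℝ) (p q fq : ℝ)
    (hFmono : StrictMono F)
    (hF01 : ∀ x, F x ∈ Set.Icc (0:ℝ) 1)
    (hG01 : ∀ x, G x ∈ Set.Icc (0:ℝ) 1)
    (hGq : ContinuousAt G q)
    (hFq : F q = p)
    (hderiv : HasDerivAt F fq q) (hfq : 0 < fq)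
    (Qf : ℝ → ℝ) (hQf0 : Qf 0 = q)
    (hQf : ∀ t ∈ Set.Icc (0:ℝ) 1, (1 - t) * F (Qf t) + t * G (Qf t) = p) :
    HasDerivWithinAt Qf ((p - G q) / fq) (Set.Icc (0:ℝ) 1) 0 := by
  subst hFq
  have hFG : ∀ x, |F x - G x| ≤ 1 := fun x =>
    abs_sub_le_iff.2 ⟨by linarith [(hF01 x).2, (hG01 x).1], by linarith [(hF01 x).1, (hG01 x).2]⟩
  have hQc := tendsto_of_mixture_eq (s := Set.Icc 0 1 \ {0}) hFmono hFG fun t ht => hQf t ht.1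
  exact hasDerivWithinAt_of_mixture_eq hQf0 hQc hderiv hfq.ne' hGq hQf

/-- Influence function of the `p`-quantile: if `F` is a continuous strictly increasing
distribution function differentiable at its `p`-quantile `q` with `F'(q) = fq > 0`,
`G` is a distribution function continuous at `q`, and `Qf t` denotes the `p`-quantile
of the mixture `F_t = (1-t)F + tG`, then `t ↦ Qf t` is differentiable at `t = 0`
(from within `[0,1]`) with derivative `(p - G q) / fq`. -/
theorem stmt10 (F G : ℝ → ℝ) (p q fq : ℝ)
    (hp : 0 < p) (hp1 : p < 1)
    (hFcont : Continuous F) (hFmono : StrictMono F)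
    (hF01 : ∀ x, F x ∈ Set.Icc (0:ℝ) 1)
    (hGmono : Monotone G) (hG01 : ∀ x, G x ∈ Set.Icc (0:ℝ) 1)
    (hGq : ContinuousAt G q)
    (hFq : F q = p)
    (hderiv : HasDerivAt F fq q) (hfq : 0 < fq)
    (Qf : ℝ → ℝ) (hQf0 : Qf 0 = q)
    (hQf : ∀ t ∈ Set.Icc (0:ℝ) 1, (1 - t) * F (Qf t) + t * G (Qf t) = p) :
    HasDerivWithinAt Qf ((p - G q) / fq) (Set.Icc (0:ℝ) 1) 0 :=
  stmt10_general F G p q fq hFmono hF01 hG01 hGq hFq hderiv hfq Qf hQf0 hQf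
end

section
/- Let (Pₙ), (Qₙ) be sequences of probability measures on measurable spaces (𝒳ₙ, 𝒜ₙ). Suppose the singular parts satisfy Qₙ⊥(𝒳ₙ) → 0 and the Radon–Nikodym derivatives dQₙᵃ/dPₙ are uniformly Pₙ-integrable (where Qₙ = Qₙᵃ + Qₙ⊥ is the Lebesgue decomposition of Qₙ with respect to Pₙ). Then Qₙ is contiguous with respect to Pₙ: for every sequence of measurable sets Aₙ with Pₙ(Aₙ) → 0 it holds that Qₙ(Aₙ) → 0. -/
open MeasureTheory Filter ENNReal

/-- If the singular parts of `Qₙ` w.r.t. `Pₙ` vanish asymptotically and the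
Radon–Nikodym derivatives are uniformly `Pₙ`-integrable, then `Qₙ` is contiguous
with respect to `Pₙ`. -/
theorem stmt11 {α : ℕ → Type*} [∀ n, MeasurableSpace (α n)]
    (P Q : ∀ n, Measure (α n))
    [∀ n, IsProbabilityMeasure (P n)] [∀ n, IsProbabilityMeasure (Q n)]
    (hsing : Tendsto (fun n => (Q n).singularPart (P n) Set.univ) atTop (nhds 0))
    (hui : ∀ ε : ℝ≥0∞, 0 < ε → ∃ M : ℝ≥0∞, M < ⊤ ∧ ∀ n,
      ∫⁻ x in {x | M < (Q n).rnDeriv (P n) x}, (Q n).rnDeriv (P n) x ∂(P n) ≤ ε) :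
    ∀ A : ∀ n, Set (α n), (∀ n, MeasurableSet (A n)) →
      Tendsto (fun n => P n (A n)) atTop (nhds 0) →
      Tendsto (fun n => Q n (A n)) atTop (nhds 0) := by
  intro A hA hP
  rw [ENNReal.tendsto_nhds_zero]
  intro ε hε
  have hε3 : 0 < ε / 3 := ENNReal.div_pos hε.ne' (by norm_num)
  obtain ⟨M, hM, hMui⟩ := hui (ε / 3) hε3
  have hs : ∀ᶠ n in atTop, (Q n).singularPart (P n) Set.univ ≤ ε / 3 := by
    rw [ENNReal.tendsto_nhds_zero] at hsing; exact hsing _ hε3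
  have hδ : 0 < ε / 3 / (M + 1) := by
    refine ENNReal.div_pos hε3.ne' ?_
    exact (ENNReal.add_lt_top.mpr ⟨hM, ENNReal.one_lt_top⟩).ne
  have hp : ∀ᶠ n in atTop, P n (A n) ≤ ε / 3 / (M + 1) := by
    rw [ENNReal.tendsto_nhds_zero] at hP; exact hP _ hδ
  filter_upwards [hs, hp] with n hsn hpn
  set f := (Q n).rnDeriv (P n) with hfdef
  have hf : Measurable f := Measure.measurable_rnDeriv _ _
  have hdecomp : Q n (A n) = (Q n).singularPart (P n) (A n) + ∫⁻ x in A n, f x ∂(P n) := by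
    conv_lhs => rw [← (Q n).singularPart_add_rnDeriv (P n)]
    rw [Measure.add_apply, withDensity_apply _ (hA n)]
  have h1 : (Q n).singularPart (P n) (A n) ≤ ε / 3 :=
    le_trans (measure_mono (Set.subset_univ _)) hsn
  have hsub : A n ⊆ (A n ∩ {x | f x ≤ M}) ∪ {x | M < f x} := by
    intro x hx
    by_cases h : f x ≤ M
    · exact Or.inl ⟨hx, h⟩
    · exact Or.inr (lt_of_not_ge h)
  have h2 : ∫⁻ x in A n, f x ∂(P n) ≤ M * P n (A n) + ε / 3 := by
    calc ∫⁻ x in A n, f x ∂(P n)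
        ≤ ∫⁻ x in (A n ∩ {x | f x ≤ M}) ∪ {x | M < f x}, f x ∂(P n) :=
          lintegral_mono_set hsub
      _ ≤ (∫⁻ x in A n ∩ {x | f x ≤ M}, f x ∂(P n)) +
            ∫⁻ x in {x | M < f x}, f x ∂(P n) := lintegral_union_le _ _ _
      _ ≤ M * P n (A n) + ε / 3 := by
          gcongr
          · calc ∫⁻ x in A n ∩ {x | f x ≤ M}, f x ∂(P n)
                ≤ ∫⁻ _ in A n ∩ {x | f x ≤ M}, M ∂(P n) :=
                  setLIntegral_mono' ((hA n).inter (measurableSet_le hf measurable_const))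
                    (fun x hx => hx.2)
              _ = M * P n (A n ∩ {x | f x ≤ M}) := setLIntegral_const _ _
              _ ≤ M * P n (A n) := by gcongr; exact Set.inter_subset_left
          · exact hMui n
  have hMP : M * P n (A n) ≤ ε / 3 := by
    calc M * P n (A n) ≤ (M + 1) * (ε / 3 / (M + 1)) := by
          gcongr; exact le_self_add
      _ ≤ ε / 3 := ENNReal.mul_div_le
  calc Q n (A n) = (Q n).singularPart (P n) (A n) + ∫⁻ x in A n, f x ∂(P n) := hdecomp
    _ ≤ ε / 3 + (M * P n (A n) + ε / 3) := add_le_add h1 h2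
    _ ≤ ε / 3 + (ε / 3 + ε / 3) := by gcongr
    _ ≤ ε := by
        rw [← add_assoc]
        exact (ENNReal.add_thirds ε).le
end

section
/- Let (Pₙ), (Qₙ) be sequences of probability measures with Qₙ contiguous with respect to Pₙ (Pₙ(Aₙ) → 0 ⟹ Qₙ(Aₙ) → 0). Then the singular part of Qₙ with respect to Pₙ vanishes asymptotically: Qₙ⊥(𝒳ₙ) → 0, and the absolutely continuous parts Qₙᵃ are uniformly absolutely continuous with respect to Pₙ: for every ε > 0 there is δ > 0 such that for all n and all measurable A, Pₙ(A) ≤ δ implies Qₙᵃ(A) ≤ ε + o(1) (i.e. for all sequences Aₙ with Pₙ(Aₙ) ≤ δ eventually, limsup Qₙᵃ(Aₙ) ≤ ε). -/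
open MeasureTheory Filter ENNReal

/-!
The singular part of `Qₙ` lives on a set that is `Pₙ`-null, so contiguity forces its mass to
vanish. For the absolutely continuous parts it suffices to bound `Qₙ` itself. If no `δ` worked
for some `ε`, then for every `k` there would be sets with `Pₙ`-mass eventually at most `1/k` and
`Qₙ`-mass frequently above `ε`; picking one index `n_k` per `k` gives a subsequence along which
`P` tends to `0` while `Q` stays above `ε`. Padding with empty sets off the subsequence turns this
into a counterexample to contiguity.
-/

/-- `Q` is contiguous with respect to `P`. -/
def Contiguous {α : ℕ → Type*} [∀ n, MeasurableSpace (α n)] (P Q : ∀ n, Measure (α n)) : Prop :=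
  ∀ A : ∀ n, Set (α n), (∀ n, MeasurableSet (A n)) →
    Tendsto (fun n => P n (A n)) atTop (nhds 0) → Tendsto (fun n => Q n (A n)) atTop (nhds 0)

theorem tendsto_of_tendsto_comp_of_eq_off_range {X : Type*} [TopologicalSpace X]
    {x : ℕ → X} {a : X} {m : ℕ → ℕ} (hm : StrictMono m) (hx : Tendsto (x ∘ m) atTop (nhds a))
    (hoff : ∀ n ∉ Set.range m, x n = a) : Tendsto x atTop (nhds a) := by
  intro s hs
  obtain ⟨K, hK⟩ := eventually_atTop.1 (hx hs)
  refine eventually_atTop.2 ⟨m K, fun n hn => ?_⟩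
  by_cases hn' : n ∈ Set.range m
  · obtain ⟨k, rfl⟩ := hn'
    exact hK k (hm.le_iff_le.1 hn)
  · rw [hoff n hn']
    exact mem_of_mem_nhds hs

namespace Contiguous

variable {α : ℕ → Type*} [∀ n, MeasurableSpace (α n)] {P Q : ∀ n, Measure (α n)}

theorem tendsto_singularPart_univ (hPQ : Contiguous P Q) :
    Tendsto (fun n => (Q n).singularPart (P n) Set.univ) atTop (nhds 0) := by
  have hsing := fun n => Measure.mutuallySingular_singularPart (Q n) (P n)
  have hQ : Tendsto (fun n => Q n (hsing n).nullSetᶜ) atTop (nhds 0) :=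
    hPQ _ (fun n => (hsing n).measurableSet_nullSet.compl)
      (by simp only [Measure.MutuallySingular.measure_compl_nullSet, tendsto_const_nhds])
  refine tendsto_of_tendsto_of_tendsto_of_le_of_le tendsto_const_nhds hQ (fun _ => zero_le)
    fun n => ?_
  calc (Q n).singularPart (P n) Set.univ = (Q n).singularPart (P n) (hsing n).nullSetᶜ := by
        rw [← measure_add_measure_compl (hsing n).measurableSet_nullSet,
          (hsing n).measure_nullSet, zero_add]
    _ ≤ Q n (hsing n).nullSetᶜ := Measure.singularPart_le _ _ _

theorem tendsto_measure_comp_strictMono (hPQ : Contiguous P Q) {m : ℕ → ℕ} (hm : StrictMono m)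
    {A : ℕ → ∀ n, Set (α n)} (hA : ∀ k, MeasurableSet (A k (m k)))
    (hP : Tendsto (fun k => P (m k) (A k (m k))) atTop (nhds 0)) :
    Tendsto (fun k => Q (m k) (A k (m k))) atTop (nhds 0) := by
  set B : ∀ n, Set (α n) := fun n => ⋃ (k) (_ : m k = n), A k n
  have hB_range : ∀ k, B (m k) = A k (m k) := fun k =>
    subset_antisymm (Set.iUnion₂_subset fun j hj => hm.injective hj ▸ subset_rfl)
      (Set.subset_iUnion₂_of_subset k rfl subset_rfl)
  have hB_off : ∀ n ∉ Set.range m, B n = ∅ := fun n hn =>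
    Set.iUnion_eq_empty.2 fun k => Set.iUnion_eq_empty.2 fun hk => absurd ⟨k, hk⟩ hn
  have hB : ∀ n, MeasurableSet (B n) := fun n =>
    MeasurableSet.iUnion fun k => MeasurableSet.iUnion fun hk => hk ▸ hA k
  have hPB : Tendsto (fun n => P n (B n)) atTop (nhds 0) :=
    tendsto_of_tendsto_comp_of_eq_off_range hm (by simpa only [Function.comp_def, hB_range])
      fun n hn => by simp only [hB_off n hn, measure_empty]
  simpa only [Function.comp_def, hB_range] using (hPQ B hB hPB).comp hm.tendsto_atTop

theorem exists_limsup_le (hPQ : Contiguous P Q) {ε : ℝ≥0∞} (hε : 0 < ε) :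
    ∃ δ : ℝ≥0∞, 0 < δ ∧ ∀ A : ∀ n, Set (α n), (∀ n, MeasurableSet (A n)) →
      (∀ᶠ n in atTop, P n (A n) ≤ δ) → limsup (fun n => Q n (A n)) atTop ≤ ε := by
  by_contra! hbad
  choose A hA hAP hAQ using fun k : ℕ => hbad (k : ℝ≥0∞)⁻¹ (ENNReal.inv_pos.2 (natCast_ne_top k))
  obtain ⟨m, hm, hmk⟩ : ∃ m : ℕ → ℕ, StrictMono m ∧
      ∀ k, P (m k) (A k (m k)) ≤ (k : ℝ≥0∞)⁻¹ ∧ ε < Q (m k) (A k (m k)) :=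
    extraction_forall_of_frequently fun k =>
      (hAP k).and_frequently (frequently_lt_of_lt_limsup (by isBoundedDefault) (hAQ k))
  have hP : Tendsto (fun k => P (m k) (A k (m k))) atTop (nhds 0) :=
    tendsto_of_tendsto_of_tendsto_of_le_of_le tendsto_const_nhds ENNReal.tendsto_inv_nat_nhds_zero
      (fun _ => zero_le) fun k => (hmk k).1
  obtain ⟨k, hk⟩ := ((hPQ.tendsto_measure_comp_strictMono hm (fun k => hA k (m k)) hP).eventually
    (gt_mem_nhds hε)).exists
  exact (hmk k).2.not_gt hk

end Contiguous

theorem stmt12_general {α : ℕ → Type*} [∀ n, MeasurableSpace (α n)]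
    (P Q : ∀ n, Measure (α n))
    (hcontig : ∀ A : ∀ n, Set (α n), (∀ n, MeasurableSet (A n)) →
      Tendsto (fun n => P n (A n)) atTop (nhds 0) →
      Tendsto (fun n => Q n (A n)) atTop (nhds 0)) :
    Tendsto (fun n => (Q n).singularPart (P n) Set.univ) atTop (nhds 0) ∧
      ∀ ε : ℝ≥0∞, 0 < ε → ∃ δ : ℝ≥0∞, 0 < δ ∧
        ∀ A : ∀ n, Set (α n), (∀ n, MeasurableSet (A n)) →
          (∀ᶠ n in atTop, P n (A n) ≤ δ) →
          Filter.limsup (fun n =>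
            ((P n).withDensity ((Q n).rnDeriv (P n))) (A n)) atTop ≤ ε := by
  have hPQ : Contiguous P Q := hcontig
  refine ⟨hPQ.tendsto_singularPart_univ, fun ε hε => ?_⟩
  obtain ⟨δ, hδ, hlimsup⟩ := hPQ.exists_limsup_le hε
  exact ⟨δ, hδ, fun A hA hPA => (limsup_le_limsup (Eventually.of_forall fun n =>
    Measure.withDensity_rnDeriv_le (Q n) (P n) (A n))).trans (hlimsup A hA hPA)⟩

/-- If `Qₙ` is contiguous with respect to `Pₙ`, then the singular parts vanish
asymptotically and the absolutely continuous parts are asymptotically uniformly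
absolutely continuous with respect to `Pₙ`. -/
theorem stmt12 {α : ℕ → Type*} [∀ n, MeasurableSpace (α n)]
    (P Q : ∀ n, Measure (α n))
    [∀ n, IsProbabilityMeasure (P n)] [∀ n, IsProbabilityMeasure (Q n)]
    (hcontig : ∀ A : ∀ n, Set (α n), (∀ n, MeasurableSet (A n)) →
      Tendsto (fun n => P n (A n)) atTop (nhds 0) →
      Tendsto (fun n => Q n (A n)) atTop (nhds 0)) :
    Tendsto (fun n => (Q n).singularPart (P n) Set.univ) atTop (nhds 0) ∧
      ∀ ε : ℝ≥0∞, 0 < ε → ∃ δ : ℝ≥0∞, 0 < δ ∧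
        ∀ A : ∀ n, Set (α n), (∀ n, MeasurableSet (A n)) →
          (∀ᶠ n in atTop, P n (A n) ≤ δ) →
          Filter.limsup (fun n =>
            ((P n).withDensity ((Q n).rnDeriv (P n))) (A n)) atTop ≤ ε :=
  stmt12_general P Q hcontig
end

section
/- Let P be a probability measure dominated by μ with density p, and suppose θ ↦ s_θ = 2√(p_θ) is differentiable in quadratic mean at θ₀ with derivative ṡ ∈ L²(μ)ᵐ, i.e. ∫ (s_{θ₀+h} − s_{θ₀} − hᵀṡ)² dμ = o(|h|²). Define the score ℓ̇ = 2 ṡ / s_{θ₀} on {s_{θ₀} > 0}. If additionally ṡ = 0 μ-a.e. on {s_{θ₀} = 0}, then ∫ ℓ̇ dP_{θ₀} = 0 (the score has zero mean) and each component ℓ̇ᵢ ∈ L²(P_{θ₀}) with ∫ ℓ̇ᵢ ℓ̇ⱼ dP_{θ₀} = ∫ ṡᵢ ṡⱼ dμ (finite information). -/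
/-!
Every `s θ` has `L²(μ)`-norm `2`, so the curve `t ↦ s (θ₀ + t eᵢ)` lies on a sphere of `L²(μ)`,
and DQM says it is differentiable at `0` with velocity `ṡᵢ`. A curve on a sphere is orthogonal
to its velocity, whence `∫ s θ₀ ṡᵢ dμ = 0`. Since `dP₀ = (s θ₀ / 2)² dμ`, this integral is `2 ∫ ℓ̇ᵢ dP₀`,
and `(s θ₀ / 2)² ℓ̇ᵢ ℓ̇ⱼ = ṡᵢ ṡⱼ` holds `μ`-a.e. because `ṡ` vanishes where `s θ₀` does.
-/

open MeasureTheory Filter Topology Asymptotics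
open scoped RealInnerProductSpace

theorem HasDerivAt.inner_eq_zero_of_norm_eventually_eq {E : Type*} [NormedAddCommGroup E]
    [InnerProductSpace ℝ E] {c : ℝ → E} {v : E} {t : ℝ} (hc : HasDerivAt c v t)
    (hnorm : ∀ᶠ u in 𝓝 t, ‖c u‖ = ‖c t‖) : ⟪c t, v⟫ = 0 := by
  have hconst : HasDerivAt (‖c ·‖ ^ 2) 0 t :=
    (hasDerivAt_const t (‖c t‖ ^ 2)).congr_of_eventuallyEq
      (hnorm.mono fun u hu => by simp only [hu])
  simpa using hc.norm_sq.unique hconst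

theorem sq_half_mul_two_mul_div (a b : ℝ) : (a / 2) ^ 2 * (2 * b / a) = a * b / 2 := by
  rcases eq_or_ne a 0 with rfl | ha
  · simp
  · field_simp

theorem sq_half_mul_two_mul_div_mul_two_mul_div {a b c : ℝ} (hb : a = 0 → b = 0)
    (hc : a = 0 → c = 0) : (a / 2) ^ 2 * (2 * b / a * (2 * c / a)) = b * c := by
  rcases eq_or_ne a 0 with ha | ha
  · simp [ha, hb ha, hc ha]
  · field_simp

namespace MeasureTheory
variable {α : Type*} [MeasurableSpace α] {μ : Measure α}

theorem MemLp.inner_toLp_eq_integral_mul {f g : α → ℝ} (hf : MemLp f 2 μ) (hg : MemLp g 2 μ) :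
    ⟪hf.toLp f, hg.toLp g⟫ = ∫ x, f x * g x ∂μ := by
  rw [L2.inner_def]
  refine integral_congr_ae ?_
  filter_upwards [hf.coeFn_toLp, hg.coeFn_toLp] with x hfx hgx
  rw [hfx, hgx, real_inner_eq_re_inner, RCLike.inner_apply]
  simp [mul_comm]

theorem MemLp.norm_toLp_sq_eq_integral_sq {f : α → ℝ} (hf : MemLp f 2 μ) :
    ‖hf.toLp f‖ ^ 2 = ∫ x, f x ^ 2 ∂μ := by
  rw [← real_inner_self_eq_norm_sq, hf.inner_toLp_eq_integral_mul hf]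
  simp_rw [sq]

theorem MemLp.hasDerivAt_toLp_of_integral_sq_le {s : ℝ → α → ℝ} {g : α → ℝ}
    (hs : ∀ t, MemLp (s t) 2 μ) (hg : MemLp g 2 μ)
    (hdqm : ∀ ε > (0 : ℝ), ∃ δ > (0 : ℝ), ∀ t, |t| ≤ δ →
      ∫ x, (s t x - s 0 x - t * g x) ^ 2 ∂μ ≤ ε * t ^ 2) :
    HasDerivAt (fun t => (hs t).toLp (s t)) (hg.toLp g) 0 := by
  rw [hasDerivAt_iff_isLittleO, isLittleO_iff]
  intro ε hε
  obtain ⟨δ, hδ, hle⟩ := hdqm (ε ^ 2) (by positivity)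
  filter_upwards [Metric.closedBall_mem_nhds (0 : ℝ) hδ] with t ht
  rw [Metric.mem_closedBall, dist_zero_right, Real.norm_eq_abs] at ht
  have hrem : MemLp (s t - s 0 - t • g) 2 μ := ((hs t).sub (hs 0)).sub (hg.const_smul t)
  have hlin : (hs t).toLp (s t) - (hs 0).toLp (s 0) - (t - 0) • hg.toLp g = hrem.toLp _ := by
    rw [sub_zero]; rfl
  rw [hlin, sub_zero, Real.norm_eq_abs, ← abs_norm, ← abs_abs t, ← abs_of_pos hε, ← abs_mul,
    ← sq_le_sq, hrem.norm_toLp_sq_eq_integral_sq, mul_pow, sq_abs]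
  simpa using hle t ht

theorem integral_mul_eq_zero_of_integral_sq_le {s : ℝ → α → ℝ} {g : α → ℝ}
    (hs : ∀ t, MemLp (s t) 2 μ) (hg : MemLp g 2 μ)
    (hnorm : ∀ t, ∫ x, s t x ^ 2 ∂μ = ∫ x, s 0 x ^ 2 ∂μ)
    (hdqm : ∀ ε > (0 : ℝ), ∃ δ > (0 : ℝ), ∀ t, |t| ≤ δ →
      ∫ x, (s t x - s 0 x - t * g x) ^ 2 ∂μ ≤ ε * t ^ 2) :
    ∫ x, s 0 x * g x ∂μ = 0 := by
  rw [← (hs 0).inner_toLp_eq_integral_mul hg]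
  refine (MemLp.hasDerivAt_toLp_of_integral_sq_le hs hg hdqm).inner_eq_zero_of_norm_eventually_eq
    (Eventually.of_forall fun t => ?_)
  rw [← sq_eq_sq₀ (norm_nonneg _) (norm_nonneg _), (hs t).norm_toLp_sq_eq_integral_sq,
    (hs 0).norm_toLp_sq_eq_integral_sq, hnorm]

theorem integral_withDensity_ofReal {ρ : α → ℝ} (hρ : AEMeasurable ρ μ) (hρ0 : 0 ≤ᵐ[μ] ρ)
    (f : α → ℝ) :
    ∫ x, f x ∂μ.withDensity (fun x => ENNReal.ofReal (ρ x)) = ∫ x, ρ x * f x ∂μ := by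
  rw [integral_withDensity_eq_integral_toReal_smul₀ hρ.ennreal_ofReal
    (.of_forall fun _ => ENNReal.ofReal_lt_top)]
  refine integral_congr_ae ?_
  filter_upwards [hρ0] with x hx
  rw [ENNReal.toReal_ofReal hx, smul_eq_mul]

theorem integrable_withDensity_ofReal_iff {ρ : α → ℝ} (hρ : AEMeasurable ρ μ) (hρ0 : 0 ≤ᵐ[μ] ρ)
    {f : α → ℝ} :
    Integrable f (μ.withDensity (fun x => ENNReal.ofReal (ρ x))) ↔
      Integrable (fun x => ρ x * f x) μ := by
  rw [integrable_withDensity_iff_integrable_smul₀' hρ.ennreal_ofReal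
    (.of_forall fun _ => ENNReal.ofReal_lt_top)]
  refine integrable_congr ?_
  filter_upwards [hρ0] with x hx
  rw [ENNReal.toReal_ofReal hx, smul_eq_mul]

theorem integral_sq_eq_four_of_withDensity_univ_eq_one {f : α → ℝ} (hf : AEMeasurable f μ)
    (hprob : μ.withDensity (fun x => ENNReal.ofReal ((f x / 2) ^ 2)) Set.univ = 1) :
    ∫ x, f x ^ 2 ∂μ = 4 := by
  have h := integral_withDensity_ofReal ((hf.div_const 2).pow_const 2)
    (.of_forall fun x => sq_nonneg (f x / 2)) fun _ => 1
  rw [integral_const, measureReal_def, hprob] at h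
  calc ∫ x, f x ^ 2 ∂μ = 4 * ∫ x, (f x / 2) ^ 2 * 1 ∂μ := by
        rw [← integral_const_mul]; congr 1; ext x; ring
    _ = 4 := by rw [← h]; norm_num

theorem integral_mul_eq_zero_of_dqm {ι : Type*} [Fintype ι] {s : (ι → ℝ) → α → ℝ}
    {sdot : ι → α → ℝ} {θ₀ : ι → ℝ} (hs : ∀ θ, MemLp (s θ) 2 μ) (hdot : ∀ i, MemLp (sdot i) 2 μ)
    (hnorm : ∀ θ, ∫ x, s θ x ^ 2 ∂μ = ∫ x, s θ₀ x ^ 2 ∂μ)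
    (hdqm : ∀ ε > (0 : ℝ), ∃ δ > (0 : ℝ), ∀ h : ι → ℝ, ‖h‖ ≤ δ →
      ∫ x, (s (θ₀ + h) x - s θ₀ x - ∑ i, h i * sdot i x) ^ 2 ∂μ ≤ ε * ‖h‖ ^ 2)
    (i : ι) : ∫ x, s θ₀ x * sdot i x ∂μ = 0 := by
  classical
  have hline := integral_mul_eq_zero_of_integral_sq_le (s := fun t => s (θ₀ + t • Pi.single i 1))
    (fun t => hs _) (hdot i) (fun t => by simp only [hnorm]) fun ε hε => ?_
  · simpa using hline
  obtain ⟨δ, hδ, hle⟩ := hdqm ε hε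
  refine ⟨δ, hδ, fun t ht => ?_⟩
  have hnorm_line : ‖t • (Pi.single i 1 : ι → ℝ)‖ = |t| := by
    rw [norm_smul, Pi.norm_single, norm_one, mul_one, Real.norm_eq_abs]
  simpa [hnorm_line, Pi.single_apply] using hle _ (hnorm_line.trans_le ht)

end MeasureTheory

theorem stmt15_general {α : Type*} [MeasurableSpace α] (μ : Measure α)
    {m : ℕ} (s : (Fin m → ℝ) → α → ℝ) (θ₀ : Fin m → ℝ)
    (sdot : Fin m → α → ℝ)
    (hsL2 : ∀ θ, MemLp (s θ) 2 μ)
    (hdot : ∀ i, MemLp (sdot i) 2 μ)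
    (hdqm : ∀ ε > (0:ℝ), ∃ δ > (0:ℝ), ∀ h : Fin m → ℝ, ‖h‖ ≤ δ →
      ∫ x, (s (θ₀ + h) x - s θ₀ x - ∑ i, h i * sdot i x) ^ 2 ∂μ ≤ ε * ‖h‖ ^ 2)
    (hprob : ∀ θ, (μ.withDensity (fun x => ENNReal.ofReal ((s θ x / 2) ^ 2)))
      Set.univ = 1)
    (hvanish : ∀ i, ∀ᵐ x ∂μ, s θ₀ x = 0 → sdot i x = 0)
    (ldot : Fin m → α → ℝ)
    (hldot : ∀ i, ldot i = fun x => 2 * sdot i x / s θ₀ x)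
    (P₀ : Measure α)
    (hP₀ : P₀ = μ.withDensity (fun x => ENNReal.ofReal ((s θ₀ x / 2) ^ 2))) :
    (∀ i, ∫ x, ldot i x ∂P₀ = 0) ∧
      (∀ i, MemLp (ldot i) 2 P₀) ∧
      (∀ i j, ∫ x, ldot i x * ldot j x ∂P₀ = ∫ x, sdot i x * sdot j x ∂μ) := by
  have hρ : AEMeasurable (fun x => (s θ₀ x / 2) ^ 2) μ :=
    ((hsL2 θ₀).1.aemeasurable.div_const 2).pow_const 2
  have hρ0 : 0 ≤ᵐ[μ] fun x => (s θ₀ x / 2) ^ 2 := .of_forall fun x => sq_nonneg _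
  have hnorm (θ) : ∫ x, s θ x ^ 2 ∂μ = 4 :=
    integral_sq_eq_four_of_withDensity_univ_eq_one (hsL2 θ).1.aemeasurable (hprob θ)
  have hscore := integral_mul_eq_zero_of_dqm hsL2 hdot (fun θ => by rw [hnorm, hnorm]) hdqm
  have hinfo (i j) : (fun x => (s θ₀ x / 2) ^ 2 * (ldot i x * ldot j x)) =ᵐ[μ]
      fun x => sdot i x * sdot j x := by
    filter_upwards [hvanish i, hvanish j] with x hxi hxj
    rw [hldot i, hldot j]
    exact sq_half_mul_two_mul_div_mul_two_mul_div hxi hxj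
  subst hP₀
  refine ⟨fun i => ?_, fun i => ?_, fun i j => ?_⟩
  · simp only [integral_withDensity_ofReal hρ hρ0, hldot i, sq_half_mul_two_mul_div,
      integral_div, hscore i, zero_div]
  · have hmeas : AEStronglyMeasurable (ldot i) μ := by
      rw [hldot i]
      exact (((hdot i).1.aemeasurable.const_mul 2).div (hsL2 θ₀).1.aemeasurable).aestronglyMeasurable
    rw [memLp_two_iff_integrable_sq (hmeas.mono_ac (withDensity_absolutelyContinuous _ _)),
      integrable_withDensity_ofReal_iff hρ hρ0]
    simpa only [sq] using ((hdot i).integrable_mul (hdot i)).congr (hinfo i i).symm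
  · rw [integral_withDensity_ofReal hρ hρ0]
    exact integral_congr_ae (hinfo i j)

/-- DQM properties: under differentiability in quadratic mean at `θ₀`, the score
`ℓ̇ = 2 ṡ / s_{θ₀}` has zero mean under `P_{θ₀}`, is square-integrable, and the
information matrix is finite with `∫ ℓ̇ᵢ ℓ̇ⱼ dP_{θ₀} = ∫ ṡᵢ ṡⱼ dμ`. -/
theorem stmt15 {α : Type*} [MeasurableSpace α] (μ : Measure α) [SigmaFinite μ]
    {m : ℕ} (s : (Fin m → ℝ) → α → ℝ) (θ₀ : Fin m → ℝ)
    (sdot : Fin m → α → ℝ)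
    (hsnn : ∀ θ x, 0 ≤ s θ x)
    (hsL2 : ∀ θ, MemLp (s θ) 2 μ)
    (hdot : ∀ i, MemLp (sdot i) 2 μ)
    (hdqm : ∀ ε > (0:ℝ), ∃ δ > (0:ℝ), ∀ h : Fin m → ℝ, ‖h‖ ≤ δ →
      ∫ x, (s (θ₀ + h) x - s θ₀ x - ∑ i, h i * sdot i x) ^ 2 ∂μ ≤ ε * ‖h‖ ^ 2)
    (hprob : ∀ θ, (μ.withDensity (fun x => ENNReal.ofReal ((s θ x / 2) ^ 2)))
      Set.univ = 1)
    (hvanish : ∀ i, ∀ᵐ x ∂μ, s θ₀ x = 0 → sdot i x = 0)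
    (ldot : Fin m → α → ℝ)
    (hldot : ∀ i, ldot i = fun x => 2 * sdot i x / s θ₀ x)
    (P₀ : Measure α)
    (hP₀ : P₀ = μ.withDensity (fun x => ENNReal.ofReal ((s θ₀ x / 2) ^ 2))) :
    (∀ i, ∫ x, ldot i x ∂P₀ = 0) ∧
      (∀ i, MemLp (ldot i) 2 P₀) ∧
      (∀ i j, ∫ x, ldot i x * ldot j x ∂P₀ = ∫ x, sdot i x * sdot j x ∂μ) :=
  stmt15_general μ s θ₀ sdot hsL2 hdot hdqm hprob hvanish ldot hldot P₀ hP₀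
end
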